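/- arXiv:1411.6478 — 2 statements merged into one kernel-verified Lean document; each statement's English description precedes it below -/
import Mathlib

section
/- (Lemma 2, Proposition 3) In any execution of Algorithm 1, for every process p_i and every process index j (including j ≠ i), the successive values taken by the vector total_i[·] at p_i are monotonically increasing with respect to the pointwise order; in particular, for j ≠ i, since channels are FIFO and reliable and the total_i[i] values sent by p_j in TOCOBC and CATCH_UP messages are strictly increasing, the successive values of total_i[j] are monotonically increasing. -/
/-!
Operational model of Algorithm 1 (the `G`-fisheye (SC,CC)-broadcast algorithm).

`n` sequential asynchronous processes `p_0, …, p_{n-1}` (type `Fin n`) exchange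
application messages of type `M` through reliable FIFO channels (one queue per
ordered pair of processes).  A proximity graph is a `SimpleGraph (Fin n)`.
-/

namespace Fisheye

/-- A tuple `⟨m, s_caus, s_tot, sender⟩`, as carried by `TOCOBC` protocol
messages and as stored in the `pending` sets of Algorithm 1. -/
structure Tuple (n : ℕ) (M : Type) where
  msg : M
  scaus : Fin n → ℕ
  stot : ℕ
  sender : Fin n

/-- Protocol messages of Algorithm 1. -/
inductive PMsg (n : ℕ) (M : Type) where
  | tocobc (tp : Tuple n M)
  | catchup (d : ℕ) (sender : Fin n)

/-- Local state of a process: the vector clock `causal_i[1..n]`, the vector of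
logical clock values `total_i[1..n]`, and the set `pending_i`. -/
structure ProcState (n : ℕ) (M : Type) where
  causal : Fin n → ℕ
  total : Fin n → ℕ
  pending : Set (Tuple n M)

/-- Global configuration: local states plus channel contents.
`chan j i` is the FIFO queue of protocol messages in transit from `p_j`
to `p_i` (head = oldest message). -/
structure Config (n : ℕ) (M : Type) where
  proc : Fin n → ProcState n M
  chan : Fin n → Fin n → List (PMsg n M)

/-- Initially all clocks are `0`, all pending sets and channels are empty. -/
def initConfig (n : ℕ) (M : Type) : Config n M where
  proc := fun _ => { causal := fun _ => 0, total := fun _ => 0, pending := ∅ }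
  chan := fun _ _ => []

/-- Lexicographic strict order on timestamps `⟨s_tot, sender⟩`. -/
def tsLt {n : ℕ} (x y : ℕ × Fin n) : Prop :=
  x.1 < y.1 ∨ (x.1 = y.1 ∧ x.2 < y.2)

/-- Lexicographic (reflexive) order on timestamps. -/
def tsLe {n : ℕ} (x y : ℕ × Fin n) : Prop := tsLt x y ∨ x = y

/-- The set `C` at process `p_i`: pending tuples whose causal timestamp is
pointwise `≤ causal_i[·]`. -/
def inC {n : ℕ} {M : Type} (c : Config n M) (i : Fin n) (tp : Tuple n M) : Prop :=
  tp ∈ (c.proc i).pending ∧ ∀ k, tp.scaus k ≤ (c.proc i).causal k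

/-- The set `T1` at `p_i`: tuples of `C` whose sender `p_j` satisfies
`⟨total_i[k], k⟩ > ⟨s_tot, j⟩` for every neighbor `p_k` of `p_j` in `G`. -/
def inT1 {n : ℕ} {M : Type} (G : SimpleGraph (Fin n)) (c : Config n M) (i : Fin n)
    (tp : Tuple n M) : Prop :=
  inC c i tp ∧ ∀ k, G.Adj tp.sender k → tsLt (tp.stot, tp.sender) ((c.proc i).total k, k)

/-- The set `T2` at `p_i`: tuples of `T1` such that every pending tuple whose
sender is a neighbor of `p_j` has a (lexicographically) larger timestamp. -/
def inT2 {n : ℕ} {M : Type} (G : SimpleGraph (Fin n)) (c : Config n M) (i : Fin n)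
    (tp : Tuple n M) : Prop :=
  inT1 G c i tp ∧ ∀ tp' ∈ (c.proc i).pending, G.Adj tp.sender tp'.sender →
    tsLt (tp.stot, tp.sender) (tp'.stot, tp'.sender)

/-- Transition labels: `p_i` toco-broadcasts `m`; `p_i` receives the head
`TOCOBC` (resp. `CATCH_UP`) message of the channel from `p_j`; `p_i`
toco-delivers the message of the pending tuple `tp`. -/
inductive Label (n : ℕ) (M : Type) where
  | broadcast (i : Fin n) (m : M)
  | recvToco (i j : Fin n)
  | recvCatchup (i j : Fin n)
  | deliver (i : Fin n) (tp : Tuple n M)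

/-- The transition relation of Algorithm 1. -/
inductive Step {n : ℕ} {M : Type} (G : SimpleGraph (Fin n)) :
    Config n M → Label n M → Config n M → Prop
  /-- `TOCO_broadcast(m)` at `p_i`: increment `total_i[i]`, send
  `TOCOBC(m, ⟨causal_i[·], total_i[i], i⟩)` to every other process, add it to
  `pending_i`, and increment `causal_i[i]`. -/
  | broadcast (c : Config n M) (i : Fin n) (m : M) :
      Step G c (.broadcast i m)
        { proc := Function.update c.proc i
            { causal := Function.update (c.proc i).causal i ((c.proc i).causal i + 1)
              total := Function.update (c.proc i).total i ((c.proc i).total i + 1)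
              pending := insert ⟨m, (c.proc i).causal, (c.proc i).total i + 1, i⟩
                           (c.proc i).pending }
          chan := fun a b =>
            if a = i ∧ b ≠ i then
              c.chan a b ++ [PMsg.tocobc ⟨m, (c.proc i).causal, (c.proc i).total i + 1, i⟩]
            else c.chan a b }
  /-- Reception by `p_i` of the head `TOCOBC(m, ⟨s_caus, s_tot, sender⟩)` of the
  channel from `p_j`: add the tuple to `pending_i`, set `total_i[sender] := s_tot`,
  and if `total_i[i] ≤ s_tot`, set `total_i[i] := s_tot + 1` and send
  `CATCH_UP(total_i[i], i)` to every other process. -/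
  | recvToco (c : Config n M) (i j : Fin n) (tp : Tuple n M) (rest : List (PMsg n M))
      (hhead : c.chan j i = PMsg.tocobc tp :: rest) :
      Step G c (.recvToco i j)
        { proc := Function.update c.proc i
            { causal := (c.proc i).causal
              total :=
                if (c.proc i).total i ≤ tp.stot then
                  Function.update (Function.update (c.proc i).total tp.sender tp.stot) i
                    (tp.stot + 1)
                else Function.update (c.proc i).total tp.sender tp.stot
              pending := insert tp (c.proc i).pending }
          chan := fun a b =>
            if a = j ∧ b = i then rest
            else if (c.proc i).total i ≤ tp.stot ∧ a = i ∧ b ≠ i then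
              c.chan a b ++ [PMsg.catchup (tp.stot + 1) i]
            else c.chan a b }
  /-- Reception by `p_i` of the head `CATCH_UP(d, s)` of the channel from `p_j`:
  set `total_i[s] := d`. -/
  | recvCatchup (c : Config n M) (i j : Fin n) (d : ℕ) (s : Fin n) (rest : List (PMsg n M))
      (hhead : c.chan j i = PMsg.catchup d s :: rest) :
      Step G c (.recvCatchup i j)
        { proc := Function.update c.proc i
            { causal := (c.proc i).causal
              total := Function.update (c.proc i).total s d
              pending := (c.proc i).pending }
          chan := fun a b => if a = j ∧ b = i then rest else c.chan a b }
  /-- The background task at `p_i`: toco-deliver the message of a tuple of `T2`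
  with lexicographically minimal timestamp `⟨s_tot, sender⟩`, remove it from
  `pending_i`, and (if its sender is not `p_i`) increment `causal_i[sender]`. -/
  | deliver (c : Config n M) (i : Fin n) (tp : Tuple n M)
      (hT2 : inT2 G c i tp)
      (hmin : ∀ tp', inT2 G c i tp' → tsLe (tp.stot, tp.sender) (tp'.stot, tp'.sender)) :
      Step G c (.deliver i tp)
        { proc := Function.update c.proc i
            { causal :=
                if tp.sender = i then (c.proc i).causal
                else Function.update (c.proc i).causal tp.sender
                       ((c.proc i).causal tp.sender + 1)
              total := (c.proc i).total
              pending := (c.proc i).pending \ {tp} }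
          chan := c.chan }

/-- Either a stuttering step (no transition) or a step of Algorithm 1. -/
def OptStep {n : ℕ} {M : Type} (G : SimpleGraph (Fin n)) (c : Config n M) :
    Option (Label n M) → Config n M → Prop
  | none, c' => c' = c
  | some l, c' => Step G c l c'

/-- An execution of Algorithm 1: an infinite sequence of configurations starting
in the initial configuration, each obtained from the previous one by (at most)
one transition.  Toco-broadcast (application) messages are assumed unique: no
message is toco-broadcast twice. -/
structure Execution (n : ℕ) (M : Type) (G : SimpleGraph (Fin n)) where
  cfg : ℕ → Config n M
  lbl : ℕ → Option (Label n M)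
  init : cfg 0 = initConfig n M
  steps : ∀ t, OptStep G (cfg t) (lbl t) (cfg (t + 1))
  uniqueBcast : ∀ (m : M) (i i' : Fin n) (t t' : ℕ),
    lbl t = some (.broadcast i m) → lbl t' = some (.broadcast i' m) → t = t'

/-- `p_i` toco-broadcasts `m` at time `t`. -/
def Execution.broadcastsAt {n : ℕ} {M : Type} {G : SimpleGraph (Fin n)}
    (e : Execution n M G) (i : Fin n) (m : M) (t : ℕ) : Prop :=
  e.lbl t = some (.broadcast i m)

/-- `p_i` toco-delivers `m` at time `t`. -/
def Execution.deliversAt {n : ℕ} {M : Type} {G : SimpleGraph (Fin n)}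
    (e : Execution n M G) (i : Fin n) (m : M) (t : ℕ) : Prop :=
  ∃ tp : Tuple n M, tp.msg = m ∧ e.lbl t = some (.deliver i tp)

/-- The message causal order `⇝_M` of the execution: generated by (i) `m1`
toco-broadcast before `m2` by the same process, (ii) `m1` toco-delivered by a
process before that process toco-broadcasts `m2`, and transitivity. -/
inductive Execution.MsgCausal {n : ℕ} {M : Type} {G : SimpleGraph (Fin n)}
    (e : Execution n M G) : M → M → Prop
  | sameProc {i : Fin n} {m1 m2 : M} {t1 t2 : ℕ} :
      t1 < t2 → e.broadcastsAt i m1 t1 → e.broadcastsAt i m2 t2 → e.MsgCausal m1 m2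
  | delivered {i : Fin n} {m1 m2 : M} {t1 t2 : ℕ} :
      t1 < t2 → e.deliversAt i m1 t1 → e.broadcastsAt i m2 t2 → e.MsgCausal m1 m2
  | trans {m1 m2 m3 : M} : e.MsgCausal m1 m2 → e.MsgCausal m2 m3 → e.MsgCausal m1 m3

/-- The delivery condition of the background task of `p_i` is enabled. -/
def Deliverable {n : ℕ} {M : Type} (G : SimpleGraph (Fin n)) (e : Execution n M G)
    (i : Fin n) (t : ℕ) : Prop :=
  ∃ tp : Tuple n M, inT2 G (e.cfg t) i tp

/-- Fairness assumptions of the model: channels are reliable (a protocol message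
in transit is eventually received) and the background task of each process is
eventually executed whenever it stays enabled. -/
structure Fair {n : ℕ} {M : Type} {G : SimpleGraph (Fin n)} (e : Execution n M G) : Prop where
  recvFair : ∀ t (i j : Fin n), (e.cfg t).chan j i ≠ [] →
    ∃ t', t ≤ t' ∧ (e.lbl t' = some (.recvToco i j) ∨ e.lbl t' = some (.recvCatchup i j))
  deliverFair : ∀ t (i : Fin n), (∀ t', t ≤ t' → Deliverable G e i t') →
    ∃ t', t ≤ t' ∧ ∃ tp : Tuple n M, e.lbl t' = some (.deliver i tp)

end Fisheye

/-!
For `j ≠ i`, consider the queue formed by `total_i[j]` followed by the clock values carried by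
the messages in transit from `p_j` to `p_i`. It is strictly increasing and bounded by
`total_j[j]`: `p_j` only ever sends its own, freshly increased clock value, and FIFO reception
pops the head of the queue into `total_i[j]`. Hence every assignment to `total_i[j]` increases
it, and the assignments to `total_i[i]` increase it by construction.
-/

namespace Fisheye

section

variable {α : Type*} [Preorder α]

def IncreasingUpTo (l : List α) (b : α) : Prop :=
  l.Pairwise (· < ·) ∧ ∀ v ∈ l, v ≤ b

namespace IncreasingUpTo

variable {l l' : List α} {b b' : α}

theorem sublist (h : IncreasingUpTo l b) (hl : l'.Sublist l) : IncreasingUpTo l' b :=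
  ⟨h.1.sublist hl, fun v hv => h.2 v (hl.subset hv)⟩

theorem concat (h : IncreasingUpTo l b) (hb : b < b') : IncreasingUpTo (l ++ [b']) b' := by
  refine ⟨List.pairwise_append.2 ⟨h.1, List.pairwise_singleton _ _, ?_⟩, ?_⟩
  · simp only [List.mem_singleton]
    rintro v hv _ rfl
    exact (h.2 v hv).trans_lt hb
  · simp only [List.mem_append, List.mem_singleton]
    rintro v (hv | rfl)
    exacts [(h.2 v hv).trans hb.le, le_rfl]

end IncreasingUpTo

end

section

variable {n : ℕ} {M : Type} {G : SimpleGraph (Fin n)} {c c' : Config n M}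

def PMsg.value : PMsg n M → ℕ
  | .tocobc tp => tp.stot
  | .catchup d _ => d

def PMsg.sender : PMsg n M → Fin n
  | .tocobc tp => tp.sender
  | .catchup _ s => s

def clockQueue (c : Config n M) (j i : Fin n) : List ℕ :=
  (c.proc i).total j :: (c.chan j i).map PMsg.value

structure ChannelInvariant (c : Config n M) : Prop where
  sender_eq : ∀ j i, ∀ msg ∈ c.chan j i, msg.sender = j ∧ j ≠ i
  clockQueue_increasingUpTo :
    ∀ j i, j ≠ i → IncreasingUpTo (clockQueue c j i) ((c.proc j).total j)

theorem channelInvariant_initConfig : ChannelInvariant (initConfig n M) :=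
  ⟨fun _ _ _ h => absurd h List.not_mem_nil,
    fun _ _ _ => by simp [clockQueue, initConfig, IncreasingUpTo]⟩

namespace ChannelInvariant

theorem head {r s : Fin n} {msg : PMsg n M} {rest : List (PMsg n M)}
    (h : ChannelInvariant c) (hhead : c.chan s r = msg :: rest) :
    msg.sender = s ∧ s ≠ r ∧ (c.proc r).total s < msg.value := by
  obtain ⟨hsender, hsr⟩ := h.sender_eq s r msg (hhead ▸ List.mem_cons_self)
  have hq := (h.clockQueue_increasingUpTo s r hsr).1
  rw [clockQueue, hhead, List.map_cons] at hq
  exact ⟨hsender, hsr, List.rel_of_pairwise_cons hq List.mem_cons_self⟩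

theorem broadcast {p : Fin n} {m : M} (h : ChannelInvariant c)
    (hs : Step G c (.broadcast p m) c') : ChannelInvariant c' := by
  cases hs
  constructor
  · intro j i msg hmsg
    simp only at hmsg
    split_ifs at hmsg with hji
    · rcases List.mem_append.1 hmsg with hmsg | hmsg
      · exact h.sender_eq j i msg hmsg
      · obtain ⟨rfl, hi⟩ := hji
        rw [List.mem_singleton.1 hmsg]
        exact ⟨rfl, Ne.symm hi⟩
    · exact h.sender_eq j i msg hmsg
  · intro j i hji
    have hq := h.clockQueue_increasingUpTo j i hji
    by_cases hj : j = p
    · subst hj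
      simpa [clockQueue, Function.update_apply, Ne.symm hji, PMsg.value] using
        hq.concat (Nat.lt_succ_self _)
    · rcases eq_or_ne i p with rfl | hi <;>
        simpa [clockQueue, Function.update_apply, hj, *] using hq

theorem recvToco {r s : Fin n} (h : ChannelInvariant c)
    (hs : Step G c (.recvToco r s) c') : ChannelInvariant c' := by
  cases hs with
  | recvToco _ _ tp _ hhead =>
    obtain ⟨hsender, hsr, -⟩ := h.head hhead
    simp only [PMsg.sender] at hsender
    constructor
    · intro j i msg hmsg
      simp only at hmsg
      split_ifs at hmsg with h1 h2
      · obtain ⟨rfl, rfl⟩ := h1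
        exact h.sender_eq j i msg (hhead ▸ List.mem_cons_of_mem _ hmsg)
      · rcases List.mem_append.1 hmsg with hmsg | hmsg
        · exact h.sender_eq j i msg hmsg
        · obtain ⟨-, rfl, hi⟩ := h2
          rw [List.mem_singleton.1 hmsg]
          exact ⟨rfl, Ne.symm hi⟩
      · exact h.sender_eq j i msg hmsg
    · intro j i hji
      have hq := h.clockQueue_increasingUpTo j i hji
      by_cases h1 : j = s ∧ i = r
      · obtain ⟨rfl, rfl⟩ := h1
        rw [clockQueue, hhead] at hq
        simpa [clockQueue, Function.update_apply, ite_apply, hsender, hsr, PMsg.value] using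
          hq.sublist (List.sublist_cons_self _ _)
      by_cases hj : j = r
      · subst hj
        by_cases hle : (c.proc j).total j ≤ tp.stot
        · simpa [clockQueue, Function.update_apply, hsender, hsr.symm, hji.symm, hle, PMsg.value]
            using hq.concat (Nat.lt_succ_of_le hle)
        · simpa [clockQueue, Function.update_apply, hsender, hsr.symm, hji.symm, hle] using hq
      · rcases eq_or_ne i r with rfl | hi
        · have hjs : j ≠ s := fun hjs => h1 ⟨hjs, rfl⟩
          simpa [clockQueue, Function.update_apply, ite_apply, hsender, hj, hjs] using hq
        · simpa [clockQueue, Function.update_apply, hi, hj] using hq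

theorem recvCatchup {r s : Fin n} (h : ChannelInvariant c)
    (hs : Step G c (.recvCatchup r s) c') : ChannelInvariant c' := by
  cases hs with
  | recvCatchup _ _ _ s' _ hhead =>
    obtain ⟨hsender, hsr, -⟩ := h.head hhead
    simp only [PMsg.sender] at hsender
    subst hsender
    constructor
    · intro j i msg hmsg
      simp only at hmsg
      split_ifs at hmsg with h1
      · obtain ⟨rfl, rfl⟩ := h1
        exact h.sender_eq j i msg (hhead ▸ List.mem_cons_of_mem _ hmsg)
      · exact h.sender_eq j i msg hmsg
    · intro j i hji
      have hq := h.clockQueue_increasingUpTo j i hji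
      by_cases h1 : j = s' ∧ i = r
      · obtain ⟨rfl, rfl⟩ := h1
        rw [clockQueue, hhead] at hq
        simpa [clockQueue, Function.update_apply, hsr, PMsg.value] using
          hq.sublist (List.sublist_cons_self _ _)
      · rcases eq_or_ne i r with rfl | hi
        · have hjs : j ≠ s' := fun hjs => h1 ⟨hjs, rfl⟩
          simpa [clockQueue, Function.update_apply, hji, hjs] using hq
        · rcases eq_or_ne j r with rfl | hj
          · simpa [clockQueue, Function.update_apply, hi, hsr.symm] using hq
          · simpa [clockQueue, Function.update_apply, hi, hj] using hq

theorem deliver {p : Fin n} {tp : Tuple n M} (h : ChannelInvariant c)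
    (hs : Step G c (.deliver p tp) c') : ChannelInvariant c' := by
  cases hs
  refine ⟨h.sender_eq, fun j i hji => ?_⟩
  by_cases hi : i = p <;> by_cases hj : j = p <;>
    simpa [clockQueue, Function.update_apply, hi, hj] using h.clockQueue_increasingUpTo j i hji

theorem step {l : Label n M} (h : ChannelInvariant c) (hs : Step G c l c') :
    ChannelInvariant c' := by
  cases l with
  | broadcast => exact h.broadcast hs
  | recvToco => exact h.recvToco hs
  | recvCatchup => exact h.recvCatchup hs
  | deliver => exact h.deliver hs

end ChannelInvariant

theorem total_le_total_update {f : Fin n → ProcState n M} {p : Fin n} {s : ProcState n M}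
    (h : (f p).total ≤ s.total) (q : Fin n) :
    (f q).total ≤ (Function.update f p s q).total := by
  rcases eq_or_ne q p with rfl | hq
  · simpa using h
  · simp [hq]

theorem Step.total_le {l : Label n M} (h : ChannelInvariant c) (hs : Step G c l c') (q : Fin n) :
    (c.proc q).total ≤ (c'.proc q).total := by
  cases hs with
  | broadcast => exact total_le_total_update (le_update_self_iff.2 (Nat.le_succ _)) q
  | recvToco _ _ _ _ hhead =>
    obtain ⟨hsender, hsr, hlt⟩ := h.head hhead
    simp only [PMsg.sender, PMsg.value] at hsender hlt
    subst hsender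
    refine total_le_total_update ?_ q
    have hle := le_update_self_iff.2 hlt.le
    split_ifs with hr
    · refine hle.trans (le_update_self_iff.2 ?_)
      simpa [hsr.symm] using hr.trans (Nat.le_succ _)
    · exact hle
  | recvCatchup _ _ _ _ _ hhead =>
    obtain ⟨hsender, -, hlt⟩ := h.head hhead
    simp only [PMsg.sender, PMsg.value] at hsender hlt
    subst hsender
    exact total_le_total_update (le_update_self_iff.2 hlt.le) q
  | deliver => exact total_le_total_update (by exact le_rfl) q

namespace OptStep

variable {ol : Option (Label n M)}

theorem channelInvariant (h : ChannelInvariant c) (hs : OptStep G c ol c') :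
    ChannelInvariant c' := by
  cases ol with
  | none => exact (show c' = c from hs) ▸ h
  | some l => exact h.step hs

theorem total_le (h : ChannelInvariant c) (hs : OptStep G c ol c') (q : Fin n) :
    (c.proc q).total ≤ (c'.proc q).total := by
  cases ol with
  | none => exact (show c' = c from hs) ▸ le_rfl
  | some l => exact Step.total_le h hs q

end OptStep

theorem Execution.channelInvariant (e : Execution n M G) (t : ℕ) :
    ChannelInvariant (e.cfg t) := by
  induction t with
  | zero => exact e.init ▸ channelInvariant_initConfig
  | succ t ih => exact (e.steps t).channelInvariant ih

theorem Execution.total_monotone (e : Execution n M G) (i : Fin n) :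
    Monotone fun t => ((e.cfg t).proc i).total :=
  monotone_nat_of_le_succ fun t => (e.steps t).total_le (e.channelInvariant t) i

end

/-- **Lemma 2, Proposition 3.**  In any execution of Algorithm 1, for every
process `p_i` and every process index `j` (including `j ≠ i`), the successive
values taken by the vector `total_i[·]` at `p_i` are monotonically increasing
with respect to the pointwise order. -/
theorem total_vector_monotone {n : ℕ} {M : Type} {G : SimpleGraph (Fin n)}
    (e : Execution n M G) (i : Fin n) :
    ∀ t t' : ℕ, t ≤ t' → ∀ j : Fin n,
      ((e.cfg t).proc i).total j ≤ ((e.cfg t').proc i).total j :=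
  fun _ _ htt' => e.total_monotone i htt'

end Fisheye
end

section
/- (G-delivery Order Theorem) In any execution of Algorithm 1, for all processes p_l and p_h that are connected by an edge in the proximity graph G, and all messages m_l toco-broadcast by p_l and m_h toco-broadcast by p_h: if some process toco-delivers m_l before m_h, then no process toco-delivers m_h before m_l. -/
/-!
Every tuple carries the timestamp `⟨s_tot, sender⟩`, ordered lexicographically. When `p_i`
toco-delivers a tuple of `p_l`, every tuple of a `G`-neighbour `p_h` that `p_i` has not delivered
yet has a larger timestamp: if it is pending at `p_i` this is the `T2` condition; otherwise it is
still in transit to `p_i` or not even broadcast, and then its `s_tot` is at least `total_i[h]`,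
which the `T1` condition puts above the delivered timestamp. That `total_i[h]` bounds these
timestamps from below comes from the FIFO invariant "`total_i[h]` ≤ values in transit from `p_h`
to `p_i` ≤ `total_h[h]`" together with the monotonicity of `total_h[h]`.

Hence if `p_i` delivers `m_l` before `m_h` the timestamp of `m_l` is the smaller one, while a
process delivering `m_h` before `m_l` would make the timestamp of `m_h` the smaller one.
-/

namespace Fisheye

variable {n : ℕ} {M : Type} {G : SimpleGraph (Fin n)} {c c' : Config n M}

namespace PMsg

@[simp]
def value_s9 : PMsg n M → ℕ
  | .tocobc tp => tp.stot
  | .catchup d _ => d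

@[simp]
def origin : PMsg n M → Fin n
  | .tocobc tp => tp.sender
  | .catchup _ s => s

end PMsg

def clockChain (c : Config n M) (a b : Fin n) : List ℕ :=
  (c.proc b).total a :: (c.chan a b).map PMsg.value_s9 ++ [(c.proc a).total a]

structure Inv (c : Config n M) : Prop where
  chan_self : ∀ a, c.chan a a = []
  origin_eq : ∀ a b, ∀ p ∈ c.chan a b, p.origin = a
  chain_sorted : ∀ a b, (clockChain c a b).Pairwise (· ≤ ·)

theorem pairwise_le_append_pair_of_le {α : Type*} [Preorder α] {l : List α} {v w : α}
    (h : (l ++ [v]).Pairwise (· ≤ ·)) (hvw : v ≤ w) : (l ++ [w, w]).Pairwise (· ≤ ·) := by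
  simp only [List.pairwise_append, forall_eq, List.pairwise_cons,
    List.mem_cons, List.not_mem_nil, or_false, List.Pairwise.nil] at h ⊢
  exact ⟨h.1, by simp, fun a ha => by simpa using (h.2.2 a ha).trans hvw⟩

theorem Inv.ne_and_origin_eq_of_chan_eq_cons (hc : Inv c) {j i : Fin n} {p : PMsg n M}
    {rest : List (PMsg n M)} (h : c.chan j i = p :: rest) : j ≠ i ∧ p.origin = j :=
  ⟨by rintro rfl; simp [hc.chan_self] at h, hc.origin_eq j i p (by simp [h])⟩

theorem Step.chain_sorted_of_broadcast {i : Fin n} {m : M}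
    (hs : Step G c (.broadcast i m) c') (hc : Inv c) (a b : Fin n) :
    (clockChain c' a b).Pairwise (· ≤ ·) := by
  cases hs
  have h := hc.chain_sorted a b
  by_cases ha : a = i <;> by_cases hb : b = i
  · subst ha hb; simp [clockChain, hc.chan_self]
  · subst ha
    simp only [clockChain, Function.update_apply, hb, if_true, if_false, ne_eq, and_self,
      not_false_eq_true, List.map_append, List.map_singleton, PMsg.value_s9, List.cons_append,
      List.append_assoc] at h ⊢
    exact pairwise_le_append_pair_of_le (l := _ :: _) h (by omega)
  · subst hb
    simpa [clockChain, Function.update_apply, ha] using h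
  · simpa [clockChain, Function.update_apply, ha, hb] using h

theorem Step.chain_sorted_of_recvToco {i j : Fin n}
    (hs : Step G c (.recvToco i j) c') (hc : Inv c) (a b : Fin n) :
    (clockChain c' a b).Pairwise (· ≤ ·) := by
  cases hs with
  | recvToco _ _ tp rest hhead =>
  obtain ⟨hji, hsender⟩ := hc.ne_and_origin_eq_of_chan_eq_cons hhead
  have h := hc.chain_sorted a b
  simp only [PMsg.origin] at hsender
  subst hsender
  by_cases ha : a = i <;> by_cases hb : b = i
  · subst ha hb; simp [clockChain, hc.chan_self, hji.symm]
  · subst ha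
    by_cases hcatch : (c.proc a).total a ≤ tp.stot
    · simp only [clockChain, Function.update_apply, hb, hcatch, hji.symm, if_true, if_false,
        ne_eq, and_self, not_false_eq_true, List.map_append, List.map_singleton, PMsg.value_s9,
        List.cons_append, List.append_assoc] at h ⊢
      exact pairwise_le_append_pair_of_le (l := _ :: _) h (by omega)
    · simpa [clockChain, Function.update_apply, hb, hcatch, hji.symm] using h
  · subst hb
    by_cases haj : a = tp.sender
    · subst haj
      convert h.sublist (List.tail_sublist _) using 1
      simp [clockChain, hhead, ite_apply, hji]
    · simpa [clockChain, Function.update_apply, ite_apply, ha, haj] using h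
  · simpa [clockChain, Function.update_apply, ite_apply, ha, hb] using h

theorem Step.chain_sorted_of_recvCatchup {i j : Fin n}
    (hs : Step G c (.recvCatchup i j) c') (hc : Inv c) (a b : Fin n) :
    (clockChain c' a b).Pairwise (· ≤ ·) := by
  cases hs with
  | recvCatchup _ _ d s rest hhead =>
  obtain ⟨hji, hsender⟩ := hc.ne_and_origin_eq_of_chan_eq_cons hhead
  have h := hc.chain_sorted a b
  simp only [PMsg.origin] at hsender
  subst hsender
  by_cases ha : a = i <;> by_cases hb : b = i
  · subst ha hb; simp [clockChain, hc.chan_self, hji.symm]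
  · subst ha
    simpa [clockChain, Function.update_apply, hb, hji.symm] using h
  · subst hb
    by_cases haj : a = s
    · subst haj
      convert h.sublist (List.tail_sublist _) using 1
      simp [clockChain, hhead, hji]
    · simpa [clockChain, Function.update_apply, ha, haj] using h
  · simpa [clockChain, Function.update_apply, ha, hb] using h

theorem Step.chain_sorted {l : Label n M} (hs : Step G c l c') (hc : Inv c) (a b : Fin n) :
    (clockChain c' a b).Pairwise (· ≤ ·) := by
  cases l with
  | broadcast => exact hs.chain_sorted_of_broadcast hc a b
  | recvToco => exact hs.chain_sorted_of_recvToco hc a b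
  | recvCatchup => exact hs.chain_sorted_of_recvCatchup hc a b
  | deliver i tp =>
    cases hs
    have h := hc.chain_sorted a b
    simp only [clockChain, Function.update_apply] at h ⊢
    split_ifs <;> subst_vars <;> exact h

theorem Step.chan_self {l : Label n M} (hs : Step G c l c') (hc : Inv c) (a : Fin n) :
    c'.chan a a = [] := by
  cases hs with
  | broadcast => simp [hc.chan_self]
  | recvToco i j _ _ hhead =>
    have hji := (hc.ne_and_origin_eq_of_chan_eq_cons hhead).1
    simp only [hc.chan_self]
    grind
  | recvCatchup i j _ _ _ hhead =>
    have hji := (hc.ne_and_origin_eq_of_chan_eq_cons hhead).1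
    simp only [hc.chan_self]
    grind
  | deliver => exact hc.chan_self a

theorem Step.origin_eq {l : Label n M} (hs : Step G c l c') (hc : Inv c) (a b : Fin n)
    (p : PMsg n M) (hp : p ∈ c'.chan a b) : p.origin = a := by
  cases hs with
  | broadcast =>
    simp only at hp
    split_ifs at hp with h
    · rcases List.mem_append.1 hp with hp | hp
      · exact hc.origin_eq a b p hp
      · simp_all
    · exact hc.origin_eq a b p hp
  | recvToco i j _ _ hhead =>
    simp only at hp
    split_ifs at hp with h h'
    · exact h.1 ▸ hc.origin_eq j i p (by simp [hhead, hp])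
    · rcases List.mem_append.1 hp with hp | hp
      · exact hc.origin_eq a b p hp
      · simp_all
    · exact hc.origin_eq a b p hp
  | recvCatchup i j _ _ _ hhead =>
    simp only at hp
    split_ifs at hp with h
    · exact h.1 ▸ hc.origin_eq j i p (by simp [hhead, hp])
    · exact hc.origin_eq a b p hp
  | deliver => exact hc.origin_eq a b p hp

theorem Step.inv {l : Label n M} (hs : Step G c l c') (hc : Inv c) : Inv c' :=
  ⟨hs.chan_self hc, hs.origin_eq hc, hs.chain_sorted hc⟩

theorem inv_initConfig : Inv (initConfig n M) :=
  ⟨fun _ => rfl, by simp [initConfig], by simp [clockChain, initConfig]⟩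

theorem Inv.total_le_value (hc : Inv c) {a b : Fin n} {p : PMsg n M} (hp : p ∈ c.chan a b) :
    (c.proc b).total a ≤ p.value_s9 :=
  List.rel_of_pairwise_cons (hc.chain_sorted a b) (List.mem_append_left _ (List.mem_map_of_mem hp))

theorem Inv.total_le_total_self (hc : Inv c) (a b : Fin n) :
    (c.proc b).total a ≤ (c.proc a).total a :=
  List.rel_of_pairwise_cons (hc.chain_sorted a b) (by simp)

theorem Step.total_self_le {l : Label n M} (hs : Step G c l c') (hc : Inv c) (k : Fin n) :
    (c.proc k).total k ≤ (c'.proc k).total k := by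
  cases hs with
  | broadcast i m => rcases eq_or_ne k i with rfl | hk <;> simp [*]
  | recvToco i j tp rest hhead =>
    obtain ⟨hji, hsender⟩ := hc.ne_and_origin_eq_of_chan_eq_cons hhead
    simp only [PMsg.origin] at hsender
    rcases eq_or_ne k i with rfl | hk
    · simp only [Function.update_self]
      split_ifs with hcatch
      · simp; omega
      · simp [hsender, hji.symm]
    · simp [hk]
  | recvCatchup i j d s rest hhead =>
    obtain ⟨hji, hsender⟩ := hc.ne_and_origin_eq_of_chan_eq_cons hhead
    simp only [PMsg.origin] at hsender
    rcases eq_or_ne k i with rfl | hk <;> simp [*, hji.symm]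
  | deliver i tp => rcases eq_or_ne k i with rfl | hk <;> simp [*]

def broadcastTuple (c : Config n M) (i : Fin n) (m : M) : Tuple n M :=
  ⟨m, (c.proc i).causal, (c.proc i).total i + 1, i⟩

def InFlight (c : Config n M) (j : Fin n) (tp : Tuple n M) : Prop :=
  tp ∈ (c.proc j).pending ∨ PMsg.tocobc tp ∈ c.chan tp.sender j

theorem Inv.mem_pending_or_total_le_of_inFlight (hc : Inv c) {i : Fin n} {tp : Tuple n M}
    (h : InFlight c i tp) : tp ∈ (c.proc i).pending ∨ (c.proc i).total tp.sender ≤ tp.stot :=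
  h.imp_right hc.total_le_value

theorem Step.inFlight_broadcastTuple {i : Fin n} {m : M} (hs : Step G c (.broadcast i m) c')
    (j : Fin n) : InFlight c' j (broadcastTuple c i m) := by
  cases hs
  by_cases hj : j = i
  · subst hj; left; simp [broadcastTuple]
  · right; simp [broadcastTuple, hj]

theorem Step.inFlight_or_deliver_of_inFlight {l : Label n M} {j : Fin n} {tp : Tuple n M}
    (hs : Step G c l c') (h : InFlight c j tp) : InFlight c' j tp ∨ l = .deliver j tp := by
  unfold InFlight at h ⊢
  cases hs <;> simp [Function.update_apply] <;> grind

theorem Step.inFlight_or_broadcast_of_inFlight {l : Label n M} {j : Fin n} {tp : Tuple n M}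
    (hs : Step G c l c') (hc : Inv c) (h : InFlight c' j tp) :
    InFlight c j tp ∨
      l = .broadcast tp.sender tp.msg ∧ tp = broadcastTuple c tp.sender tp.msg := by
  unfold InFlight at h ⊢
  cases hs with
  | broadcast i m =>
    simp [Function.update_apply, broadcastTuple] at h ⊢
    grind
  | recvToco i j' tp' rest hhead =>
    have hsender := (hc.ne_and_origin_eq_of_chan_eq_cons hhead).2
    simp [Function.update_apply] at h hsender ⊢
    grind
  | recvCatchup | deliver =>
    simp [Function.update_apply] at h ⊢
    grind

theorem Step.inT2_of_deliver {i : Fin n} {tp : Tuple n M} (hs : Step G c (.deliver i tp) c') :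
    inT2 G c i tp := by
  cases hs; assumption

theorem tsLt_iff_toLex_lt {x y : ℕ × Fin n} : tsLt x y ↔ toLex x < toLex y :=
  Prod.Lex.toLex_lt_toLex.symm

theorem tsLt_of_inT2 {i : Fin n} {tp tp' : Tuple n M} (hT2 : inT2 G c i tp)
    (hadj : G.Adj tp.sender tp'.sender)
    (h : tp' ∈ (c.proc i).pending ∨ (c.proc i).total tp'.sender ≤ tp'.stot) :
    tsLt (tp.stot, tp.sender) (tp'.stot, tp'.sender) := by
  rcases h with hpend | hle
  · exact hT2.2 tp' hpend hadj
  · have h := hT2.1.2 tp'.sender hadj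
    rw [tsLt_iff_toLex_lt] at h ⊢
    exact h.trans_le (Prod.Lex.toLex_mono ⟨hle, le_rfl⟩)

namespace Execution

variable (e : Execution n M G)

theorem step_of_lbl_eq_some {t : ℕ} {l : Label n M} (h : e.lbl t = some l) :
    Step G (e.cfg t) l (e.cfg (t + 1)) := by
  simpa [h, OptStep] using e.steps t

theorem cfg_succ_of_lbl_eq_none {t : ℕ} (h : e.lbl t = none) : e.cfg (t + 1) = e.cfg t := by
  simpa [h, OptStep] using e.steps t

theorem inv (t : ℕ) : Inv (e.cfg t) := by
  induction t with
  | zero => rw [e.init]; exact inv_initConfig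
  | succ t ih =>
    cases hl : e.lbl t with
    | none => rwa [e.cfg_succ_of_lbl_eq_none hl]
    | some l => exact (e.step_of_lbl_eq_some hl).inv ih

theorem total_self_mono (k : Fin n) : Monotone fun t => ((e.cfg t).proc k).total k := by
  refine monotone_nat_of_le_succ fun t => ?_
  cases hl : e.lbl t with
  | none => rw [e.cfg_succ_of_lbl_eq_none hl]
  | some l => exact (e.step_of_lbl_eq_some hl).total_self_le (e.inv t) k

theorem exists_broadcast_of_inFlight {t : ℕ} {j : Fin n} {tp : Tuple n M}
    (h : InFlight (e.cfg t) j tp) :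
    ∃ s < t, e.lbl s = some (.broadcast tp.sender tp.msg) ∧
      tp = broadcastTuple (e.cfg s) tp.sender tp.msg ∧
      ∀ t', s < t' → t' ≤ t → InFlight (e.cfg t') j tp := by
  induction t with
  | zero => simp [e.init, InFlight, initConfig] at h
  | succ t ih =>
    have extend : ∀ s, (∀ t', s < t' → t' ≤ t → InFlight (e.cfg t') j tp) →
        ∀ t', s < t' → t' ≤ t + 1 → InFlight (e.cfg t') j tp := fun _ hpast t' hs ht =>
      (Nat.lt_or_eq_of_le ht).elim (fun ht => hpast t' hs (Nat.le_of_lt_succ ht)) (· ▸ h)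
    cases hl : e.lbl t with
    | none =>
      rw [e.cfg_succ_of_lbl_eq_none hl] at h
      obtain ⟨s, hst, hb, htp, hpast⟩ := ih h
      exact ⟨s, by omega, hb, htp, extend s hpast⟩
    | some l =>
      rcases (e.step_of_lbl_eq_some hl).inFlight_or_broadcast_of_inFlight (e.inv t) h with
        hprev | ⟨rfl, htp⟩
      · obtain ⟨s, hst, hb, htp, hpast⟩ := ih hprev
        exact ⟨s, by omega, hb, htp, extend s hpast⟩
      · exact ⟨t, by omega, hl, htp, fun t' hs ht => by rwa [show t' = t + 1 by omega]⟩

theorem inFlight_or_delivered {s t : ℕ} {i : Fin n} {m : M} (hb : e.broadcastsAt i m s)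
    (hst : s < t) (j : Fin n) :
    InFlight (e.cfg t) j (broadcastTuple (e.cfg s) i m) ∨
      ∃ t' < t, e.lbl t' = some (.deliver j (broadcastTuple (e.cfg s) i m)) := by
  induction t, hst using Nat.le_induction with
  | base => exact Or.inl ((e.step_of_lbl_eq_some hb).inFlight_broadcastTuple j)
  | succ t _ ih =>
    rcases ih with hin | ⟨t', ht', hd⟩
    · cases hl : e.lbl t with
      | none => exact Or.inl (e.cfg_succ_of_lbl_eq_none hl ▸ hin)
      | some l =>
        rcases (e.step_of_lbl_eq_some hl).inFlight_or_deliver_of_inFlight hin with hin' | rfl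
        · exact Or.inl hin'
        · exact Or.inr ⟨t, t.lt_succ_self, hl⟩
    · exact Or.inr ⟨t', by omega, hd⟩

theorem lbl_eq_deliver_broadcastTuple {s t : ℕ} {i j : Fin n} {m : M}
    (hb : e.broadcastsAt i m s) (hd : e.deliversAt j m t) :
    e.lbl t = some (.deliver j (broadcastTuple (e.cfg s) i m)) := by
  obtain ⟨tp, rfl, hl⟩ := hd
  have hpend := (e.step_of_lbl_eq_some hl).inT2_of_deliver.1.1.1
  obtain ⟨s', -, hb', htp, -⟩ := e.exists_broadcast_of_inFlight (Or.inl hpend)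
  obtain rfl := e.uniqueBcast _ _ _ _ _ hb' hb
  have hsender : tp.sender = i := by
    rw [broadcastsAt, hb'] at hb
    injection hb with hb
    injection hb
  rw [hl, ← hsender, ← htp]

theorem inFlight_of_inFlight_of_le {s t t₂ : ℕ} {i j : Fin n} {m : M}
    (hb : e.broadcastsAt i m s)
    (h : InFlight (e.cfg t₂) j (broadcastTuple (e.cfg s) i m)) (hst : s < t) (ht : t ≤ t₂) :
    InFlight (e.cfg t) j (broadcastTuple (e.cfg s) i m) := by
  obtain ⟨s', -, hb', -, hpast⟩ := e.exists_broadcast_of_inFlight h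
  obtain rfl := e.uniqueBcast _ _ _ _ _ hb' hb
  exact hpast t hst ht

theorem tsLt_of_deliver {s t : ℕ} {i k : Fin n} {m : M} {tp : Tuple n M}
    (hd : e.lbl t = some (.deliver i tp)) (hadj : G.Adj tp.sender k)
    (h : t < s ∨ InFlight (e.cfg t) i (broadcastTuple (e.cfg s) k m)) :
    tsLt (tp.stot, tp.sender) ((broadcastTuple (e.cfg s) k m).stot, k) := by
  refine tsLt_of_inT2 (e.step_of_lbl_eq_some hd).inT2_of_deliver hadj ?_
  rcases h with hts | hin
  · right
    calc ((e.cfg t).proc i).total k ≤ ((e.cfg t).proc k).total k :=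
          (e.inv t).total_le_total_self k i
      _ ≤ ((e.cfg s).proc k).total k := e.total_self_mono k hts.le
      _ ≤ (broadcastTuple (e.cfg s) k m).stot := Nat.le_succ _
  · exact (e.inv t).mem_pending_or_total_le_of_inFlight hin

end Execution

/-- **G-delivery Order Theorem.**  In any execution of Algorithm 1, for all
processes `p_l` and `p_h` connected by an edge of the proximity graph `G`, and
all messages `m_l` toco-broadcast by `p_l` and `m_h` toco-broadcast by `p_h`:
if some process toco-delivers `m_l` before `m_h`, then no process toco-delivers
`m_h` before `m_l`, i.e., any process that toco-delivers `m_h` must have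
toco-delivered `m_l` at some earlier time. -/
theorem g_delivery_order {n : ℕ} {M : Type} {G : SimpleGraph (Fin n)}
    (e : Execution n M G) :
    ∀ (l h : Fin n), G.Adj l h →
      ∀ (ml mh : M) (tl th : ℕ),
        e.broadcastsAt l ml tl → e.broadcastsAt h mh th →
        (∃ (i : Fin n) (t1 t2 : ℕ), t1 < t2 ∧ e.deliversAt i ml t1 ∧ e.deliversAt i mh t2) →
        ∀ (j : Fin n) (t : ℕ), e.deliversAt j mh t →
          ∃ t', t' < t ∧ e.deliversAt j ml t' := by
  intro l h hadj ml mh tl th hbl hbh ⟨i, t1, t2, h12, hdl, hdh⟩ j t hd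
  replace hdl := e.lbl_eq_deliver_broadcastTuple hbl hdl
  replace hdh := e.lbl_eq_deliver_broadcastTuple hbh hdh
  replace hd := e.lbl_eq_deliver_broadcastTuple hbh hd
  have hlh := e.tsLt_of_deliver hdl hadj (m := mh) (s := th) <| by
    rcases lt_or_gt_of_ne (fun h : t1 = th => by cases hbh.symm.trans (h ▸ hdl)) with h1 | h1
    · exact Or.inl h1
    · have hpend := (e.step_of_lbl_eq_some hdh).inT2_of_deliver.1.1.1
      exact Or.inr (e.inFlight_of_inFlight_of_le hbh (Or.inl hpend) h1 h12.le)
  by_contra! hnot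
  have hhl := e.tsLt_of_deliver hd hadj.symm (m := ml) (s := tl) <| by
    rcases lt_or_gt_of_ne (fun h : t = tl => by cases hbl.symm.trans (h ▸ hd)) with h1 | h1
    · exact Or.inl h1
    · refine Or.inr ((e.inFlight_or_delivered hbl h1 j).resolve_right ?_)
      rintro ⟨t', ht', hd'⟩
      exact hnot t' ht' ⟨_, rfl, hd'⟩
  rw [tsLt_iff_toLex_lt] at hlh hhl
  exact hlh.asymm hhl

end Fisheye
end
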